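/- Let L be a positive integer, 0 ≤ w_s ≤ L an integer, and δ a real number with 0 < δ ≤ 1/2. Then σ(L,δ,w_s/L) ≥ (1/L)·log(Σ_{j=w_s}^{L} C(L,j)) − h(δ), where C(a,b) denotes the binomial coefficient (asymptotic Gilbert–Varshamov bound for SECCs). -/

import Mathlib

open Finset Filter

/-- Weight (number of ones) of a binary word. -/
def wt {n : ℕ} (x : Fin n → Bool) : ℕ := (Finset.univ.filter fun i => x i = true).card

/-- The index (in a word of length `m * L`) of position `j` of subblock `i`. -/
def subIdx (m L : ℕ) (i : Fin m) (j : Fin L) : Fin (m * L) :=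
  ⟨i.val * L + j.val, by
    have hj : j.val < L := j.isLt
    have hi : i.val + 1 ≤ m := i.isLt
    calc i.val * L + j.val < i.val * L + L := Nat.add_lt_add_left hj _
      _ = (i.val + 1) * L := by ring
      _ ≤ m * L := Nat.mul_le_mul hi (Nat.le_refl L)⟩

/-- The `i`-th subblock (of length `L`) of a binary word of length `m * L`. -/
def subblock (m L : ℕ) (x : Fin (m * L) → Bool) (i : Fin m) : Fin L → Bool :=
  fun j => x (subIdx m L i j)

/-- The CSCC space: binary words of length `m * L` each of whose `m` subblocks of
length `L` has weight exactly `w`. -/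
def CSCCspace (m L w : ℕ) : Set (Fin (m * L) → Bool) :=
  {x | ∀ i : Fin m, wt (subblock m L x i) = w}

/-- The SECC space: binary words of length `m * L` each of whose `m` subblocks of
length `L` has weight at least `w`. -/
def SECCspace (m L w : ℕ) : Set (Fin (m * L) → Bool) :=
  {x | ∀ i : Fin m, w ≤ wt (subblock m L x i)}

/-- A code with minimum distance `d` inside the space `Sp`. -/
def isCode {n : ℕ} (Sp : Set (Fin n → Bool)) (d : ℕ) (C : Finset (Fin n → Bool)) : Prop :=
  (↑C : Set (Fin n → Bool)) ⊆ Sp ∧ ∀ x ∈ C, ∀ y ∈ C, x ≠ y → d ≤ hammingDist x y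

/-- The ball of radius `t` around `x`, taken inside the space `Sp`. -/
def ball {n : ℕ} (Sp : Set (Fin n → Bool)) (x : Fin n → Bool) (t : ℕ) :
    Set (Fin n → Bool) :=
  {y | y ∈ Sp ∧ hammingDist x y ≤ t}

/-- `C(m,L,d,w)`: the maximum size of an `(m,L,d,w)`-CSCC. -/
noncomputable def maxCSCC (m L d w : ℕ) : ℕ :=
  sSup {k | ∃ C : Finset (Fin (m * L) → Bool), isCode (CSCCspace m L w) d C ∧ C.card = k}

/-- `S(m,L,d,w)`: the maximum size of an `(m,L,d,w)`-SECC. -/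
noncomputable def maxSECC (m L d w : ℕ) : ℕ :=
  sSup {k | ∃ C : Finset (Fin (m * L) → Bool), isCode (SECCspace m L w) d C ∧ C.card = k}

/-- `A(n,d,w)`: the maximum size of a constant weight code. -/
noncomputable def maxCWC (n d w : ℕ) : ℕ :=
  sSup {k | ∃ C : Finset (Fin n → Bool), isCode {x | wt x = w} d C ∧ C.card = k}

/-- `H(n,d,w)`: the maximum size of a heavy weight code. -/
noncomputable def maxHWC (n d w : ℕ) : ℕ :=
  sSup {k | ∃ C : Finset (Fin n → Bool), isCode {x | w ≤ wt x} d C ∧ C.card = k}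

/-- `A(n,d)`: the maximum size of a binary code of length `n` and distance `d`. -/
noncomputable def maxBinary (n d : ℕ) : ℕ :=
  sSup {k | ∃ C : Finset (Fin n → Bool),
    (∀ x ∈ C, ∀ y ∈ C, x ≠ y → d ≤ hammingDist x y) ∧ C.card = k}

/-- `A_q(n,d)`: the maximum size of a `q`-ary code of length `n` and distance `d`. -/
noncomputable def maxQary (q n d : ℕ) : ℕ :=
  sSup {k | ∃ C : Finset (Fin n → Fin q),
    (∀ x ∈ C, ∀ y ∈ C, x ≠ y → d ≤ hammingDist x y) ∧ C.card = k}

/-- The size of a radius-`r` CSCC ball: the sum over all tuples `(u_1, …, u_m)` with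
`0 ≤ u_i ≤ min{w, L-w}` and `2(u_1 + ⋯ + u_m) ≤ r` of `∏ i, C(w,u_i)·C(L-w,u_i)`. -/
def csccBallSize (m L w r : ℕ) : ℕ :=
  ∑ u ∈ (Finset.univ : Finset (Fin m → Fin (min w (L - w) + 1))).filter
      (fun u => 2 * (∑ i, (u i : ℕ)) ≤ r),
    ∏ i, (w.choose (u i : ℕ)) * ((L - w).choose (u i : ℕ))

/-- The binary entropy function (base-2 logarithms, `h 0 = h 1 = 0`). -/
noncomputable def binent (p : ℝ) : ℝ :=
  -(p * Real.logb 2 p) - (1 - p) * Real.logb 2 (1 - p)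

/-- The asymptotic CSCC rate `γ(L,δ,w/L)`. -/
noncomputable def gammaRate (L : ℕ) (δ : ℝ) (w : ℕ) : ℝ :=
  Filter.limsup (fun m : ℕ =>
    Real.logb 2 (maxCSCC m L ⌊(m : ℝ) * L * δ⌋₊ w) / ((m : ℝ) * L)) Filter.atTop

/-- The asymptotic SECC rate `σ(L,δ,w/L)`. -/
noncomputable def sigmaRate (L : ℕ) (δ : ℝ) (w : ℕ) : ℝ :=
  Filter.limsup (fun m : ℕ =>
    Real.logb 2 (maxSECC m L ⌊(m : ℝ) * L * δ⌋₊ w) / ((m : ℝ) * L)) Filter.atTop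

/-!
A code of maximal size in `SECCspace m L w` with minimum distance `d` covers the space by Hamming
balls of radius `d` (otherwise a word could be added), so
`S(m,L,d,w) · V(mL,d) ≥ |SECCspace m L w| = (∑_{j ≥ w} C(L,j))^m`, the subblocks being
independent. For `d ≤ nδ` with `δ ≤ 1/2` the ball volume satisfies `V(n,d) ≤ 2^(n h(δ))`, since
each term `C(n,i) δ^i (1-δ)^(n-i)` of `(δ + (1-δ))^n = 1` with `i ≤ d` is at least
`C(n,i) 2^(-n h(δ))`. Taking logarithms gives the bound for every `m`.
-/

section HammingCube

variable {ι : Type*} [Fintype ι] [DecidableEq ι]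

theorem card_filter_hammingDist_eq (c : ι → Bool) (j : ℕ) :
    #{y : ι → Bool | hammingDist c y = j} = (Fintype.card ι).choose j := by
  rw [← card_univ, ← card_powersetCard]
  refine card_nbij' (fun y => ({i | c i ≠ y i} : Finset ι))
    (fun s i => if i ∈ s then !c i else c i)
    (fun y hy => ?_) (fun s hs => ?_) (fun y _ => ?_) (fun s _ => ?_)
  · simpa [hammingDist] using hy
  · simp only [mem_coe, mem_powersetCard, subset_univ, true_and] at hs
    simp only [coe_filter, mem_univ, true_and, Set.mem_ofPred_eq, hammingDist]
    rw [← hs]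
    congr 1
    ext i
    by_cases hi : i ∈ s <;> simp [hi]
  · funext i
    by_cases h : c i = y i <;> cases hc : c i <;> simp_all
  · ext i
    by_cases hi : i ∈ s <;> simp [hi]

theorem card_filter_hammingDist_mem (c : ι → Bool) (s : Finset ℕ) :
    #{y : ι → Bool | hammingDist c y ∈ s} = ∑ j ∈ s, (Fintype.card ι).choose j := by
  rw [card_eq_sum_card_fiberwise (f := hammingDist c) (t := s) fun y hy => by simpa using hy]
  refine sum_congr rfl fun j hj => ?_
  rw [filter_filter, ← card_filter_hammingDist_eq c j]
  congr 1
  ext y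
  simp only [mem_filter, mem_univ, true_and, and_iff_right_iff_imp]
  rintro rfl
  exact hj

theorem card_filter_hammingDist_le (c : ι → Bool) (r : ℕ) :
    #{y : ι → Bool | hammingDist c y ≤ r} = ∑ j ∈ range (r + 1), (Fintype.card ι).choose j := by
  simp_rw [← card_filter_hammingDist_mem c, mem_range, Nat.lt_succ_iff]

end HammingCube

theorem wt_eq_hammingDist {n : ℕ} (y : Fin n → Bool) : wt y = hammingDist (fun _ => false) y := by
  simp only [wt, hammingDist]
  congr 1
  ext i
  cases y i <;> simp

theorem card_filter_le_wt (L w : ℕ) :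
    #{y : Fin L → Bool | w ≤ wt y} = ∑ j ∈ Icc w L, L.choose j := by
  have hwt : ∀ y : Fin L → Bool, w ≤ wt y ↔ wt y ∈ Icc w L := fun y => by
    simp [mem_Icc, wt_eq_hammingDist, hammingDist_le_card_fintype.trans_eq (Fintype.card_fin L)]
  simp_rw [hwt, wt_eq_hammingDist, card_filter_hammingDist_mem, Fintype.card_fin]

def subblockEquiv (m L : ℕ) : (Fin (m * L) → Bool) ≃ (Fin m → Fin L → Bool) :=
  (finProdFinEquiv.arrowCongr (Equiv.refl Bool)).symm.trans (Equiv.curry _ _ _)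

theorem subblockEquiv_apply (m L : ℕ) (x : Fin (m * L) → Bool) :
    subblockEquiv m L x = subblock m L x := by
  funext i j
  simp only [subblockEquiv, subblock, subIdx, Equiv.trans_apply, Equiv.arrowCongr_symm,
    Equiv.arrowCongr_apply, Equiv.curry_apply, Function.curry, Function.comp_apply,
    Equiv.symm_symm, Equiv.refl_symm, Equiv.refl_apply]
  congr 1
  ext
  simp only [finProdFinEquiv_apply_val]
  ring

theorem ncard_SECCspace (m L w : ℕ) :
    (SECCspace m L w).ncard = (∑ j ∈ Icc w L, L.choose j) ^ m := by
  have hpre : SECCspace m L w =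
      subblockEquiv m L ⁻¹' ↑(Fintype.piFinset fun _ : Fin m => {y : Fin L → Bool | w ≤ wt y}) := by
    ext x
    simp [SECCspace, subblockEquiv_apply]
  rw [hpre, Set.ncard_preimage_of_injective_subset_range (subblockEquiv m L).injective
      (by simp), Set.ncard_coe_finset, Fintype.card_piFinset, prod_const, card_univ,
    Fintype.card_fin, card_filter_le_wt]

section Codes

variable {n : ℕ}

theorem card_le_two_pow (C : Finset (Fin n → Bool)) : #C ≤ 2 ^ n := by
  simpa using C.card_le_univ

theorem isCode.insert {Sp : Set (Fin n → Bool)} {d : ℕ} {C : Finset (Fin n → Bool)}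
    (hC : isCode Sp d C) {x : Fin n → Bool} (hx : x ∈ Sp) (hfar : ∀ c ∈ C, d ≤ hammingDist x c) :
    isCode Sp d (insert x C) := by
  refine ⟨by simpa [Set.insert_subset_iff] using ⟨hx, hC.1⟩, ?_⟩
  simp only [mem_insert]
  rintro a (rfl | ha) b (rfl | hb) hab
  · exact absurd rfl hab
  · exact hfar b hb
  · exact hammingDist_comm a b ▸ hfar a ha
  · exact hC.2 a ha b hb hab

theorem exists_isCode_ncard_le (Sp : Set (Fin n → Bool)) (d : ℕ) :
    ∃ C, isCode Sp d C ∧ Sp.ncard ≤ #C * ∑ i ∈ range (d + 1), n.choose i := by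
  classical
  obtain ⟨C, hC, hmax⟩ :=
    (univ.filter (isCode Sp d)).exists_max_image card ⟨∅, by simp [isCode]⟩
  replace hC : isCode Sp d C := (mem_filter.mp hC).2
  have hcover : Sp ⊆ ↑(C.biUnion fun c => {y | hammingDist c y ≤ d}) := by
    intro x hx
    by_contra hfar
    simp only [coe_biUnion, coe_filter, mem_univ, true_and, Set.mem_iUnion, mem_coe,
      Set.mem_ofPred_eq, exists_prop, not_exists, not_and, not_le] at hfar
    have hxC : x ∉ C := fun h => by simpa using hfar x h
    have hbig := hmax _ (mem_filter.mpr ⟨mem_univ _, hC.insert hx fun c hc =>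
      hammingDist_comm c x ▸ (hfar c hc).le⟩)
    rw [card_insert_of_notMem hxC] at hbig
    omega
  refine ⟨C, hC, ?_⟩
  calc Sp.ncard ≤ #(C.biUnion fun c => {y | hammingDist c y ≤ d}) := by
        rw [← Set.ncard_coe_finset]; exact Set.ncard_le_ncard hcover
    _ ≤ ∑ c ∈ C, #{y | hammingDist c y ≤ d} := card_biUnion_le
    _ = #C * ∑ i ∈ range (d + 1), n.choose i := by
        simp [card_filter_hammingDist_le]

end Codes

theorem card_le_maxSECC {m L d w : ℕ} {C : Finset (Fin (m * L) → Bool)}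
    (hC : isCode (SECCspace m L w) d C) : #C ≤ maxSECC m L d w :=
  le_csSup ⟨2 ^ (m * L), by rintro k ⟨C, -, rfl⟩; exact card_le_two_pow C⟩ ⟨C, hC, rfl⟩

theorem maxSECC_le_two_pow (m L d w : ℕ) : maxSECC m L d w ≤ 2 ^ (m * L) :=
  csSup_le ⟨0, ∅, by simp [isCode], rfl⟩ (by rintro k ⟨C, -, rfl⟩; exact card_le_two_pow C)

theorem pow_le_maxSECC_mul (m L d w : ℕ) :
    (∑ j ∈ Icc w L, L.choose j) ^ m
      ≤ maxSECC m L d w * ∑ i ∈ range (d + 1), (m * L).choose i := by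
  obtain ⟨C, hC, hcard⟩ := exists_isCode_ncard_le (SECCspace m L w) d
  rw [← ncard_SECCspace]
  exact hcard.trans (Nat.mul_le_mul_right _ (card_le_maxSECC hC))

section Entropy

variable {p : ℝ}

theorem antitone_rpow_mul_one_sub_rpow (hp0 : 0 < p) (hp : p ≤ 1 - p) (c : ℝ) :
    Antitone fun x : ℝ => p ^ x * (1 - p) ^ (c - x) := by
  intro a b hab
  have hq : 0 < 1 - p := hp0.trans_le hp
  calc p ^ b * (1 - p) ^ (c - b) = p ^ a * p ^ (b - a) * (1 - p) ^ (c - b) := by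
        rw [← Real.rpow_add hp0, add_sub_cancel]
    _ ≤ p ^ a * (1 - p) ^ (b - a) * (1 - p) ^ (c - b) := by
        gcongr
    _ = p ^ a * (1 - p) ^ (c - a) := by
        rw [mul_assoc, ← Real.rpow_add hq, sub_add_sub_cancel']

theorem two_rpow_neg_mul_binent (hp0 : 0 < p) (hp1 : p < 1) (x : ℝ) :
    (2 : ℝ) ^ (-(x * binent p)) = p ^ (x * p) * (1 - p) ^ (x - x * p) := by
  have hexp : -(x * binent p)
      = Real.logb 2 p * (x * p) + Real.logb 2 (1 - p) * (x - x * p) := by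
    simp only [binent]; ring
  rw [hexp, Real.rpow_add two_pos, Real.rpow_mul zero_le_two, Real.rpow_mul zero_le_two,
    Real.rpow_logb two_pos (by norm_num) hp0, Real.rpow_logb two_pos (by norm_num) (by linarith)]

theorem sum_range_choose_le_two_rpow {n d : ℕ} (hp0 : 0 < p) (hp : p ≤ 1 / 2)
    (hd : (d : ℝ) ≤ n * p) :
    (∑ i ∈ range (d + 1), n.choose i : ℝ) ≤ 2 ^ (n * binent p) := by
  have hp1 : p ≤ 1 - p := by linarith
  have hq : 0 ≤ 1 - p := by linarith
  have hdn : d ≤ n := by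
    exact_mod_cast hd.trans (mul_le_of_le_one_right n.cast_nonneg (by linarith))
  have hterm : ∀ i ∈ range (d + 1),
      (2 : ℝ) ^ (-(n * binent p)) ≤ p ^ i * (1 - p) ^ (n - i) := by
    intro i hi
    have hid : i ≤ d := Nat.lt_succ_iff.mp (mem_range.mp hi)
    rw [two_rpow_neg_mul_binent hp0 (by linarith), ← Real.rpow_natCast, ← Real.rpow_natCast,
      Nat.cast_sub (hid.trans hdn)]
    exact antitone_rpow_mul_one_sub_rpow hp0 hp1 n ((Nat.cast_le.2 hid).trans hd)
  have hsum : (∑ i ∈ range (d + 1), n.choose i : ℝ) * 2 ^ (-(n * binent p)) ≤ 1 :=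
    calc _ ≤ ∑ i ∈ range (d + 1), p ^ i * (1 - p) ^ (n - i) * n.choose i := by
          rw [sum_mul]
          refine sum_le_sum fun i hi => ?_
          rw [mul_comm]
          exact mul_le_mul_of_nonneg_right (hterm i hi) (n.choose i).cast_nonneg
      _ ≤ ∑ i ∈ range (n + 1), p ^ i * (1 - p) ^ (n - i) * n.choose i :=
          sum_le_sum_of_subset_of_nonneg (range_subset_range.2 (by omega))
            fun i _ _ => by positivity
      _ = 1 := by rw [← add_pow, add_sub_cancel, one_pow]
  rwa [Real.rpow_neg zero_le_two, ← div_eq_mul_inv, div_le_one (by positivity)] at hsum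

end Entropy

section NatLog

variable {b : ℝ}

theorem logb_natCast_nonneg (hb : 1 < b) (k : ℕ) : 0 ≤ Real.logb b k :=
  div_nonneg (Real.log_natCast_nonneg k) (Real.log_nonneg hb.le)

theorem logb_natCast_mono (hb : 1 < b) : Monotone fun k : ℕ => Real.logb b k := by
  intro k l hkl
  rcases k.eq_zero_or_pos with rfl | hk
  · simpa using logb_natCast_nonneg hb l
  · exact Real.logb_le_logb_of_le hb (Nat.cast_pos.2 hk) (Nat.cast_le.2 hkl)

theorem logb_natCast_mul_le (hb : 1 < b) (k l : ℕ) :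
    Real.logb b (k * l : ℕ) ≤ Real.logb b k + Real.logb b l := by
  rcases eq_or_ne k 0 with rfl | hk
  · simpa using logb_natCast_nonneg hb l
  rcases eq_or_ne l 0 with rfl | hl
  · simpa using logb_natCast_nonneg hb k
  rw [Nat.cast_mul, Real.logb_mul (Nat.cast_ne_zero.2 hk) (Nat.cast_ne_zero.2 hl)]

end NatLog

theorem logb_maxSECC_le (m L d w : ℕ) : Real.logb 2 (maxSECC m L d w) ≤ m * L := by
  calc Real.logb 2 (maxSECC m L d w) ≤ Real.logb 2 (2 ^ (m * L) : ℕ) :=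
        logb_natCast_mono one_lt_two (maxSECC_le_two_pow m L d w)
    _ = m * L := by
        rw [Nat.cast_pow, Real.logb_pow, Nat.cast_ofNat, Real.logb_self_eq_one one_lt_two,
          Nat.cast_mul, mul_one]

theorem sub_binent_le_logb_maxSECC_div {L w m : ℕ} (hL : 0 < L) (hm : 0 < m) {δ : ℝ}
    (hδ0 : 0 < δ) (hδ : δ ≤ 1 / 2) :
    (1 / (L : ℝ)) * Real.logb 2 ((∑ j ∈ Icc w L, L.choose j : ℕ)) - binent δ
      ≤ Real.logb 2 (maxSECC m L ⌊(m : ℝ) * L * δ⌋₊ w) / ((m : ℝ) * L) := by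
  set d := ⌊(m : ℝ) * L * δ⌋₊
  set S := ∑ j ∈ Icc w L, L.choose j
  set V := ∑ i ∈ range (d + 1), (m * L).choose i
  have hV : Real.logb 2 V ≤ (m * L) * binent δ := by
    have hd : (d : ℝ) ≤ ((m * L : ℕ) : ℝ) * δ := by
      push_cast; exact Nat.floor_le (by positivity)
    have hV1 : (0 : ℝ) < V := Nat.cast_pos.2 (sum_pos' (fun _ _ => Nat.zero_le _)
      ⟨0, mem_range.2 d.succ_pos, by simp⟩)
    calc Real.logb 2 V ≤ Real.logb 2 (2 ^ (((m * L : ℕ) : ℝ) * binent δ)) :=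
          Real.logb_le_logb_of_le one_lt_two hV1
            (by exact_mod_cast sum_range_choose_le_two_rpow hδ0 hδ hd)
      _ = (m * L) * binent δ := by
          rw [Real.logb_rpow two_pos (by norm_num), Nat.cast_mul]
  have hS : m * Real.logb 2 S ≤ Real.logb 2 (maxSECC m L d w) + Real.logb 2 V := by
    rw [← Real.logb_pow, ← Nat.cast_pow]
    exact (logb_natCast_mono one_lt_two (pow_le_maxSECC_mul m L d w)).trans
      (logb_natCast_mul_le one_lt_two _ _)
  rw [le_div_iff₀ (by positivity)]
  field_simp
  linarith

theorem stmt_14_general (L w : ℕ) (hL : 0 < L)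
    (δ : ℝ) (hδ0 : 0 < δ) (hδ : δ ≤ 1 / 2) :
    (1 / (L : ℝ)) * Real.logb 2 ((∑ j ∈ Finset.Icc w L, L.choose j : ℕ)) - binent δ
      ≤ sigmaRate L δ w := by
  refine le_limsup_of_frequently_le (Eventually.frequently ?_)
    (isBoundedUnder_of_eventually_le (a := 1) ?_)
  · filter_upwards [eventually_gt_atTop 0] with m hm
    exact sub_binent_le_logb_maxSECC_div hL hm hδ0 hδ
  · filter_upwards [eventually_gt_atTop 0] with m hm
    rw [div_le_one (by positivity)]
    exact logb_maxSECC_le m L _ w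

/-- Asymptotic Gilbert–Varshamov bound for SECCs:
`σ(L,δ,w/L) ≥ (1/L)·log(Σ_{j=w}^{L} C(L,j)) − h(δ)`. -/
theorem stmt_14 (L w : ℕ) (hL : 0 < L) (hw : w ≤ L)
    (δ : ℝ) (hδ0 : 0 < δ) (hδ : δ ≤ 1 / 2) :
    (1 / (L : ℝ)) * Real.logb 2 ((∑ j ∈ Finset.Icc w L, L.choose j : ℕ)) - binent δ
      ≤ sigmaRate L δ w :=
  stmt_14_general L w hL δ hδ0 hδ
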